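/- arXiv:2512.16482 — 4 statements merged into one kernel-verified Lean document; each statement's English description precedes it below -/
import Mathlib

section
/- Let q ≥ 11 be a real number and let α be a real number in the closed interval [4/(3q-2), 1/2]. Then (1/α) · q^{1+α} < q^2 - 2. -/
/-!
The map `α ↦ q ^ (1 + α) - (q ^ 2 - 2) * α` is convex, so it is negative on `[4/(3q-2), 1/2]` as
soon as it is negative at both endpoints. At `α = 1/2` this is `2 q √q < q ^ 2 - 2`. At
`y = 4/(3q-2)` we bound `log q` by its tangent line at `11` and `exp` by its second Taylor
polynomial; since `3 y q = 4 + 2 y`, what remains is a polynomial inequality in `y ∈ (0, 4/31]`.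
-/

open Real Set

noncomputable def gvGap (q α : ℝ) : ℝ := q ^ (1 + α) - (q ^ 2 - 2) * α

lemma convexOn_gvGap {q : ℝ} (hq : 0 < q) : ConvexOn ℝ univ (gvGap q) :=
  (((convexOn_rpow_left hq).translate_right 1).sub
    ((LinearMap.mul ℝ ℝ (q ^ 2 - 2)).concaveOn convex_univ)).congr fun α _ ↦ by
    simp [gvGap, sub_mul]

lemma gvGap_neg_of_mem_Icc {q a b α : ℝ} (hq : 0 < q) (ha : gvGap q a < 0)
    (hb : gvGap q b < 0) (hα : α ∈ Icc a b) : gvGap q α < 0 := by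
  rw [← segment_eq_Icc (hα.1.trans hα.2)] at hα
  exact ((convexOn_gvGap hq).le_on_segment (mem_univ a) (mem_univ b) hα).trans_lt (max_lt ha hb)

lemma Real.log_eleven_lt : log 11 < 12 / 5 := by
  rw [log_lt_iff_lt_exp (by norm_num)]
  have h : (11 : ℝ) ^ 5 < exp (12 / 5) ^ 5 := by
    rw [← exp_nat_mul, show ((5 : ℕ) : ℝ) * (12 / 5) = ((12 : ℕ) : ℝ) * 1 by norm_num, exp_nat_mul]
    calc (11 : ℝ) ^ 5 < 2.7182818283 ^ 12 := by norm_num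
      _ ≤ exp 1 ^ 12 := by gcongr; exact exp_one_gt_d9.le
  exact lt_of_pow_lt_pow_left₀ 5 (exp_pos _).le h

lemma Real.exp_le_one_add_add_sq {x : ℝ} (hx0 : 0 ≤ x) (hx1 : x ≤ 1) :
    exp x ≤ 1 + x + 3 / 4 * x ^ 2 := by
  have h := exp_bound' hx0 hx1 (n := 2) two_pos
  norm_num [Finset.sum_range_succ, Nat.factorial] at h
  linarith

lemma gvGap_half_neg {q : ℝ} (hq : 9 ≤ q) : gvGap q (1 / 2) < 0 := by
  have hs : √q ^ 2 = q := sq_sqrt (by linarith)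
  have hs3 : 3 ≤ √q := le_sqrt_of_sq_le (by linarith)
  rw [gvGap, rpow_add (by linarith), rpow_one, ← sqrt_eq_rpow]
  nlinarith [pow_le_pow_left₀ (by norm_num) hs3 3]

lemma gvGap_left_endpoint_neg {q : ℝ} (hq : 11 ≤ q) : gvGap q (4 / (3 * q - 2)) < 0 := by
  set y := 4 / (3 * q - 2) with hy_def
  have hy0 : 0 < y := div_pos four_pos (by linarith)
  have hy1 : y ≤ 4 / 31 := by rw [hy_def]; gcongr; linarith
  have hyq : y * q = (4 + 2 * y) / 3 := by
    linarith [div_mul_cancel₀ 4 (by linarith : 3 * q - 2 ≠ 0)]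
  have hlog : log q ≤ 7 / 5 + q / 11 := by
    have h := log_le_sub_one_of_pos (x := q / 11) (by positivity)
    rw [log_div (by linarith) (by norm_num)] at h
    linarith [log_eleven_lt]
  set X := 7 / 5 * y + (4 + 2 * y) / 33 with hX_def
  have hylog : 0 ≤ y * log q := mul_nonneg hy0.le (log_nonneg (by linarith))
  have hylogX : y * log q ≤ X := by
    linarith [mul_le_mul_of_nonneg_left hlog hy0.le]
  have hexp : q ^ y ≤ 1 + X + 3 / 4 * X ^ 2 := by
    rw [rpow_def_of_pos (by linarith), mul_comm]
    calc exp (y * log q) ≤ 1 + y * log q + 3 / 4 * (y * log q) ^ 2 :=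
          exp_le_one_add_add_sq hylog (by linarith)
      _ ≤ 1 + X + 3 / 4 * X ^ 2 := by gcongr
  have hpoly : (4 + 2 * y) * (1 + X + 3 / 4 * X ^ 2) < (4 + 2 * y) ^ 2 / 3 - 6 * y ^ 2 := by
    rw [hX_def]
    nlinarith [mul_nonneg hy0.le (sub_nonneg.2 hy1)]
  rw [gvGap, rpow_add (by linarith), rpow_one, sub_neg]
  nlinarith [mul_le_mul_of_nonneg_left hexp (by linarith : (0 : ℝ) ≤ q)]

/-- Key analytic inequality: for real `q ≥ 11` and `α ∈ [4/(3q-2), 1/2]`,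
`(1/α)·q^{1+α} < q² - 2`. -/
theorem stmt6 (q α : ℝ) (hq : 11 ≤ q)
    (hα1 : 4 / (3 * q - 2) ≤ α) (hα2 : α ≤ 1 / 2) :
    (1 / α) * q ^ (1 + α) < q ^ 2 - 2 := by
  have hα0 : 0 < α := (div_pos four_pos (by linarith)).trans_le hα1
  have hgap := gvGap_neg_of_mem_Icc (by linarith) (gvGap_left_endpoint_neg hq)
    (gvGap_half_neg (by linarith)) ⟨hα1, hα2⟩
  rw [gvGap, sub_neg] at hgap
  rw [one_div_mul_eq_div, div_lt_iff₀ hα0]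
  linarith
end

section
/- Let q ≥ 11 be a real number. The function F(q) = log(4(q^2-2)/(3q-2)) - (1 + 4/(3q-2))·log q is positive for all q ≥ 11. -/
/-!
Splitting off `log q` leaves `F(q) = log G - 4 log q / (3q - 2)` with
`G = 4(q² - 2)/((3q - 2)q) > 1`. The bound `log(1 + a) ≥ 2a/(a + 2)` gives
`log G ≥ 2(q² + 2q - 8)/(7q² - 2q - 8)`, while the tangent line of `log` at `11` together with
`11² ≤ 2⁷` gives `log q ≤ (7/2) log 2 + (q - 11)/11`. What remains is a polynomial
inequality.
-/

open Real

lemma Real.log_le_log_add_sub_div {a x : ℝ} (ha : 0 < a) (hx : 0 < x) :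
    log x ≤ log a + (x - a) / a := by
  have h := log_le_sub_one_of_pos (div_pos hx ha)
  rw [log_div hx.ne' ha.ne', div_sub_one ha.ne'] at h
  linarith

lemma Real.log_eleven_le : log 11 ≤ 7 / 2 * log 2 := by
  have h : log ((11 : ℝ) ^ 2) ≤ log ((2 : ℝ) ^ 7) := log_le_log (by norm_num) (by norm_num)
  rw [log_pow, log_pow] at h
  push_cast at h
  linarith

lemma two_mul_div_le_log_four_mul_div {q : ℝ} (hq : 2 ≤ q) :
    2 * (q ^ 2 + 2 * q - 8) / (7 * q ^ 2 - 2 * q - 8) ≤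
      log (4 * (q ^ 2 - 2) / ((3 * q - 2) * q)) := by
  have hd : (3 * q - 2) * q ≠ 0 := by nlinarith
  have ha : 0 ≤ (q ^ 2 + 2 * q - 8) / ((3 * q - 2) * q) :=
    div_nonneg (by nlinarith) (by nlinarith)
  have hG : 4 * (q ^ 2 - 2) / ((3 * q - 2) * q) = 1 + (q ^ 2 + 2 * q - 8) / ((3 * q - 2) * q) := by
    rw [one_add_div hd]
    ring
  have hbound : 2 * ((q ^ 2 + 2 * q - 8) / ((3 * q - 2) * q)) /
      ((q ^ 2 + 2 * q - 8) / ((3 * q - 2) * q) + 2) =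
      2 * (q ^ 2 + 2 * q - 8) / (7 * q ^ 2 - 2 * q - 8) := by
    rw [mul_div_assoc', div_add' _ _ _ hd, div_div_div_cancel_right₀ hd]
    ring
  rw [hG, ← hbound]
  exact le_log_one_add_of_nonneg ha

lemma four_mul_log_lt {q : ℝ} (hq : 11 ≤ q) :
    4 * log q < (3 * q - 2) * log (4 * (q ^ 2 - 2) / ((3 * q - 2) * q)) := by
  have hlog_q : log q ≤ 7 / 2 * log 2 + (q - 11) / 11 := by
    have := log_le_log_add_sub_div (a := 11) (by norm_num) (by linarith : (0 : ℝ) < q)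
    linarith [log_eleven_le]
  have hden : 0 < 7 * q ^ 2 - 2 * q - 8 := by nlinarith
  have hpoly : 4 * log q < (3 * q - 2) * (2 * (q ^ 2 + 2 * q - 8) / (7 * q ^ 2 - 2 * q - 8)) := by
    rw [mul_div_assoc', lt_div_iff₀ hden]
    nlinarith [log_two_lt_d9]
  exact hpoly.trans_le <| mul_le_mul_of_nonneg_left
    (two_mul_div_le_log_four_mul_div (by linarith)) (by linarith)

/-- `F(q) = log(4(q²-2)/(3q-2)) - (1 + 4/(3q-2))·log q` is positive for `q ≥ 11`. -/
theorem stmt7 (q : ℝ) (hq : 11 ≤ q) :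
    0 < Real.log (4 * (q ^ 2 - 2) / (3 * q - 2))
        - (1 + 4 / (3 * q - 2)) * Real.log q := by
  have hq0 : 0 < q := by linarith
  have h3q : 0 < 3 * q - 2 := by linarith
  have hsplit : log (4 * (q ^ 2 - 2) / (3 * q - 2)) =
      log (4 * (q ^ 2 - 2) / ((3 * q - 2) * q)) + log q := by
    rw [← log_mul (div_pos (by nlinarith) (by positivity)).ne' hq0.ne', div_mul_eq_div_div,
      div_mul_cancel₀ _ hq0.ne']
  have hfrac : 4 / (3 * q - 2) * log q < log (4 * (q ^ 2 - 2) / ((3 * q - 2) * q)) := by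
    rw [div_mul_eq_mul_div, div_lt_iff₀ h3q]
    linarith [four_mul_log_lt hq]
  rw [hsplit]
  linarith
end

section
/- Let q ≥ 11 be an integer, n = 2(q^2-1), and let d be an integer with 5 ≤ d ≤ 3q/2. Then q^{3d-1} < ((2(q^2-1)^2)/(d-1))^{d-1}, and consequently q^{3d-1} < (q^2-1)^{d-1} · binom(n, d-1). -/
/-!
With `k = d - 1` and `B = 2(q² - 2)/q`, the bound `(q² - 1)² ≥ q²(q² - 2)` reduces the first
inequality to `q² < (B/k)^k` for `4 ≤ k ≤ (3q - 2)/2`. Since `x ↦ x log (B/x)` is concave, it is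
enough to check this at the two ends of the interval. At `k = 4` it is a polynomial inequality; at
the right end `B/k ≥ (4/3)(1 + 1/(2q))`, and Bernoulli's inequality reduces it to
`q⁴ < (12/5)(4/3)^(3q - 2)`, which follows by induction on `q`. The second inequality then follows
from `(n/k)^k ≤ C(n, k)`.
-/

open Real Finset
open scoped Nat

-- Compare the factors of `n^k k!` and `k^k n(n-1)⋯(n-k+1)` one by one: `n(k-i) ≤ k(n-i)`.
theorem Nat.pow_le_pow_mul_choose {n k : ℕ} (h : k ≤ n) : n ^ k ≤ k ^ k * n.choose k := by
  have key : n ^ k * k ! ≤ k ^ k * k ! * n.choose k := by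
    calc n ^ k * k ! = ∏ i ∈ range k, n * (k - i) := by
          rw [prod_mul_distrib, prod_const, card_range, ← Nat.descFactorial_eq_prod_range,
            Nat.descFactorial_self]
      _ ≤ ∏ i ∈ range k, k * (n - i) := by
          refine prod_le_prod' fun i hi => ?_
          have hik : i ≤ k := (mem_range.mp hi).le
          zify [hik, hik.trans h]
          nlinarith
      _ = k ^ k * k ! * n.choose k := by
          rw [prod_mul_distrib, prod_const, card_range, ← Nat.descFactorial_eq_prod_range,
            Nat.descFactorial_eq_factorial_mul_choose, mul_assoc]
  rw [mul_right_comm] at key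
  exact Nat.le_of_mul_le_mul_right key k.factorial_pos

theorem Nat.div_pow_le_choose {n k : ℕ} (h : k ≤ n) : ((n : ℝ) / k) ^ k ≤ n.choose k := by
  rcases k.eq_zero_or_pos with rfl | hk
  · simp
  rw [div_pow, div_le_iff₀ (by positivity), mul_comm]
  exact_mod_cast Nat.pow_le_pow_mul_choose h

theorem Real.min_le_mul_log_div_of_mem_Icc {B a b x : ℝ} (hB : B ≠ 0) (ha : 0 ≤ a)
    (hx : x ∈ Set.Icc a b) : min (a * log (B / a)) (b * log (B / b)) ≤ x * log (B / x) := by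
  have hconc : ConcaveOn ℝ (Set.Ici 0) fun y => y * log (B / y) := by
    refine (((LinearMap.mulRight ℝ (log B)).concaveOn (convex_Ici 0)).add
      concaveOn_negMulLog).congr fun y _ => ?_
    rcases eq_or_ne y 0 with rfl | hy
    · simp
    · simp [negMulLog, log_div hB hy]
      ring
  exact hconc.min_le_of_mem_Icc ha (ha.trans (hx.1.trans hx.2)) hx

section
variable {q : ℕ}

lemma five_mul_pow_four_lt_twelve_mul_pow (hq : 11 ≤ q) :
    5 * (q : ℝ) ^ 4 < 12 * (4 / 3) ^ (3 * q - 2) := by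
  induction q, hq using Nat.le_induction with
  | base => norm_num
  | succ q hq ih =>
    have hq' : (11 : ℝ) ≤ q := by exact_mod_cast hq
    have hstep : ((q : ℝ) + 1) ^ 4 ≤ 64 / 27 * (q : ℝ) ^ 4 :=
      calc ((q : ℝ) + 1) ^ 4 ≤ (12 / 11 * q) ^ 4 := by gcongr; linarith
        _ ≤ 64 / 27 * (q : ℝ) ^ 4 := by rw [mul_pow]; gcongr; norm_num
    rw [show 3 * (q + 1) - 2 = 3 * q - 2 + 3 by omega, pow_add]
    push_cast
    linarith

lemma sq_lt_pow_div_four (hq : 11 ≤ q) : (q : ℝ) ^ 2 < (2 * ((q : ℝ) ^ 2 - 2) / q / 4) ^ 4 := by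
  have hq' : (11 : ℝ) ≤ q := by exact_mod_cast hq
  have hcube : 4 * (q : ℝ) ^ 3 < ((q : ℝ) ^ 2 - 2) ^ 2 := by nlinarith
  rw [div_div, div_pow, lt_div_iff₀ (by positivity)]
  calc (q : ℝ) ^ 2 * (q * 4) ^ 4 = 16 * (4 * (q : ℝ) ^ 3) ^ 2 := by ring
    _ < 16 * (((q : ℝ) ^ 2 - 2) ^ 2) ^ 2 := by gcongr
    _ = (2 * ((q : ℝ) ^ 2 - 2)) ^ 4 := by ring

lemma pow_four_lt_pow_three_mul_sub_two (hq : 11 ≤ q) :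
    (q : ℝ) ^ 4 < (2 * ((q : ℝ) ^ 2 - 2) / q / ((3 * q - 2) / 2)) ^ (3 * q - 2) := by
  have hq' : (11 : ℝ) ≤ q := by exact_mod_cast hq
  have hratio : 4 / 3 * (1 + 1 / (2 * q)) ≤ 2 * ((q : ℝ) ^ 2 - 2) / q / ((3 * q - 2) / 2) := by
    rw [div_div, le_div_iff₀ (by nlinarith)]
    field_simp
    nlinarith
  have hbernoulli : (12 / 5 : ℝ) ≤ (1 + 1 / (2 * q)) ^ (3 * q - 2) := by
    refine le_trans ?_ (one_add_mul_le_pow (by linarith [show (0 : ℝ) ≤ 1 / (2 * q) by positivity]) _)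
    rw [Nat.cast_sub (by omega), mul_one_div, ← sub_le_iff_le_add', le_div_iff₀ (by positivity)]
    push_cast
    linarith
  calc (q : ℝ) ^ 4 < 12 / 5 * (4 / 3) ^ (3 * q - 2) := by
        linarith [five_mul_pow_four_lt_twelve_mul_pow hq]
    _ ≤ (1 + 1 / (2 * q)) ^ (3 * q - 2) * (4 / 3) ^ (3 * q - 2) := by gcongr
    _ = (4 / 3 * (1 + 1 / (2 * q))) ^ (3 * q - 2) := by rw [mul_pow, mul_comm]
    _ ≤ _ := by gcongr

lemma sq_lt_pow_div_of_four_le (hq : 11 ≤ q) {k : ℕ} (hk : 4 ≤ k) (hkq : 2 * k + 2 ≤ 3 * q) :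
    (q : ℝ) ^ 2 < (2 * ((q : ℝ) ^ 2 - 2) / q / k) ^ k := by
  have hq' : (11 : ℝ) ≤ q := by exact_mod_cast hq
  have hkq' : 2 * (k : ℝ) + 2 ≤ 3 * q := by exact_mod_cast hkq
  set B := 2 * ((q : ℝ) ^ 2 - 2) / q
  have hBpos : 0 < B := by
    have : (0 : ℝ) < (q : ℝ) ^ 2 - 2 := by nlinarith
    positivity
  have hmin := min_le_mul_log_div_of_mem_Icc hBpos.ne' (by norm_num : (0 : ℝ) ≤ 4)
    (⟨by exact_mod_cast hk, by rw [le_div_iff₀ two_pos]; linarith⟩ :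
      (k : ℝ) ∈ Set.Icc (4 : ℝ) ((3 * q - 2) / 2))
  have hleft : log ((q : ℝ) ^ 2) < 4 * log (B / 4) := by
    have h := (lt_pow_iff_log_lt (by positivity) (by positivity)).mp (sq_lt_pow_div_four hq)
    rwa [Nat.cast_ofNat] at h
  have hright : log ((q : ℝ) ^ 2) < (3 * q - 2) / 2 * log (B / ((3 * q - 2) / 2)) := by
    have h := (lt_pow_iff_log_lt (by positivity) (div_pos hBpos (by linarith))).mp
      (pow_four_lt_pow_three_mul_sub_two hq)
    rw [show (q : ℝ) ^ 4 = ((q : ℝ) ^ 2) ^ 2 by ring, log_pow, Nat.cast_sub (by omega)] at h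
    push_cast at h
    linarith
  rw [lt_pow_iff_log_lt (by positivity) (by positivity)]
  exact (lt_min hleft hright).trans_le hmin

lemma pow_lt_two_mul_sq_sub_one_sq_div_pow (hq : 11 ≤ q) {k : ℕ} (hk : 4 ≤ k)
    (hkq : 2 * k + 2 ≤ 3 * q) :
    (q : ℝ) ^ (3 * k + 2) < (2 * ((q : ℝ) ^ 2 - 1) ^ 2 / k) ^ k := by
  have hq' : (11 : ℝ) ≤ q := by exact_mod_cast hq
  have hk' : (0 : ℝ) < k := by exact_mod_cast (by omega : 0 < k)
  calc (q : ℝ) ^ (3 * k + 2) = ((q : ℝ) ^ 3) ^ k * (q : ℝ) ^ 2 := by ring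
    _ < ((q : ℝ) ^ 3) ^ k * (2 * ((q : ℝ) ^ 2 - 2) / q / k) ^ k := by
        gcongr
        exact sq_lt_pow_div_of_four_le hq hk hkq
    _ = (2 * ((q : ℝ) ^ 2 * ((q : ℝ) ^ 2 - 2)) / k) ^ k := by
        rw [← mul_pow]
        field_simp
    _ ≤ (2 * ((q : ℝ) ^ 2 - 1) ^ 2 / k) ^ k := by
        have : (0 : ℝ) ≤ (q : ℝ) ^ 2 - 2 := by nlinarith
        gcongr
        linarith [sq_nonneg ((q : ℝ) ^ 2)]

end

/-- For integer `q ≥ 11`, `n = 2(q²-1)` and integer `5 ≤ d ≤ 3q/2`: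
`q^{3d-1} < (2(q²-1)²/(d-1))^{d-1}` and hence
`q^{3d-1} < (q²-1)^{d-1}·C(n, d-1)`. -/
theorem stmt9 (q d : ℕ) (hq : 11 ≤ q) (hd1 : 5 ≤ d) (hd2 : 2 * d ≤ 3 * q) :
    (q : ℝ) ^ (3 * d - 1)
        < ((2 * ((q : ℝ) ^ 2 - 1) ^ 2) / ((d : ℝ) - 1)) ^ (d - 1) ∧
    (q : ℝ) ^ (3 * d - 1)
        < ((q : ℝ) ^ 2 - 1) ^ (d - 1) * ((2 * (q ^ 2 - 1)).choose (d - 1) : ℝ) := by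
  obtain ⟨k, rfl⟩ : ∃ k, d = k + 1 := ⟨d - 1, by omega⟩
  rw [show 3 * (k + 1) - 1 = 3 * k + 2 by omega, Nat.add_sub_cancel, Nat.cast_add_one,
    add_sub_cancel_right]
  have hlt := pow_lt_two_mul_sq_sub_one_sq_div_pow hq (by omega : 4 ≤ k) (by omega)
  refine ⟨hlt, hlt.trans_le ?_⟩
  have hn : ((2 * (q ^ 2 - 1) : ℕ) : ℝ) = 2 * ((q : ℝ) ^ 2 - 1) := by
    rw [Nat.cast_mul, Nat.cast_sub (Nat.one_le_pow _ _ (by omega))]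
    push_cast
    ring
  have hkn : k ≤ 2 * (q ^ 2 - 1) := by
    have : 3 * q ≤ q ^ 2 := by nlinarith
    generalize q ^ 2 = s at this ⊢
    omega
  have hpos : (0 : ℝ) ≤ (q : ℝ) ^ 2 - 1 := by nlinarith
  calc (2 * ((q : ℝ) ^ 2 - 1) ^ 2 / k) ^ k
      = ((q : ℝ) ^ 2 - 1) ^ k * (((2 * (q ^ 2 - 1) : ℕ) : ℝ) / k) ^ k := by
        rw [hn, ← mul_pow]
        ring
    _ ≤ _ := by
        gcongr
        exact Nat.div_pow_le_choose hkn
end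

section
/- Let τ be a positive even integer, C_0, D_0 positive integers, C_j = C_0 - jτ/2, D_j = D_0 + jτ/2, F(j) = max(2C_j, D_j). Define k_1 = max(⌊(2C_0-2)/τ⌋, 0), k_2 = max(⌈(4C_0-2D_0)/(3τ)⌉, 0), k_3 = max(⌊(4C_0-2D_0+2τ)/(3τ)⌋, 0). Then the minimum of F(j) over integers 0 ≤ j ≤ k_1 equals: 2C_{k_1} if k_1 < k_2; D_{k_2} if k_3 = k_2 ≤ k_1; and 2C_{k_2-1} if k_3 < k_2 ≤ k_1. -/
/-- Minimal total footprint `T*` for the two-point construction (τ even case):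
the minimum of `F(j) = max(2C_j, D_j)` over `0 ≤ j ≤ k₁` is `2C_{k₁}` if
`k₁ < k₂`, `D_{k₂}` if `k₃ = k₂ ≤ k₁`, and `2C_{k₂-1}` if `k₃ < k₂ ≤ k₁`. -/
theorem stmt13 (τ C0 D0 : ℤ) (hτ : 0 < τ) (hτe : 2 ∣ τ)
    (hC0 : 0 < C0) (hD0 : 0 < D0)
    (C D : ℤ → ℤ) (hC : ∀ j, C j = C0 - j * (τ / 2)) (hD : ∀ j, D j = D0 + j * (τ / 2))
    (F : ℤ → ℤ) (hF : ∀ j, F j = max (2 * C j) (D j))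
    (k1 k2 k3 : ℤ)
    (hk1 : k1 = max ⌊(2 * (C0 : ℚ) - 2) / τ⌋ 0)
    (hk2 : k2 = max ⌈(4 * (C0 : ℚ) - 2 * D0) / (3 * τ)⌉ 0)
    (hk3 : k3 = max ⌊(4 * (C0 : ℚ) - 2 * D0 + 2 * τ) / (3 * τ)⌋ 0) :
    (k1 < k2 → IsLeast {x : ℤ | ∃ j : ℤ, 0 ≤ j ∧ j ≤ k1 ∧ F j = x} (2 * C k1)) ∧
    (k3 = k2 ∧ k2 ≤ k1 →
      IsLeast {x : ℤ | ∃ j : ℤ, 0 ≤ j ∧ j ≤ k1 ∧ F j = x} (D k2)) ∧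
    (k3 < k2 ∧ k2 ≤ k1 →
      IsLeast {x : ℤ | ∃ j : ℤ, 0 ≤ j ∧ j ≤ k1 ∧ F j = x} (2 * C (k2 - 1))) := by
  obtain ⟨t, rfl⟩ := hτe
  have ht0 : 0 < t := by omega
  have ht2 : 2 * t / 2 = t := by omega
  simp only [ht2] at hC hD
  have hk1n : 0 ≤ k1 := by rw [hk1]; exact le_max_right _ _
  have hk2n : 0 ≤ k2 := by rw [hk2]; exact le_max_right _ _
  have hk3n : 0 ≤ k3 := by rw [hk3]; exact le_max_right _ _
  have hqpos : (0:ℚ) < ((2 * t : ℤ) : ℚ) := by exact_mod_cast hτ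
  have h3pos : (0:ℚ) < 3 * ((2 * t : ℤ) : ℚ) := by linarith
  have hFD : ∀ j, D j ≤ F j := fun j => by rw [hF]; exact le_max_right _ _
  have hFC : ∀ j, 2 * C j ≤ F j := fun j => by rw [hF]; exact le_max_left _ _
  have hmax : ∀ a : ℤ, 1 ≤ max a 0 → max a 0 = a := by
    intro a h
    rcases max_choice a 0 with h' | h'
    · exact h'
    · rw [h'] at h; linarith
  have hCm : ∀ i j : ℤ, i ≤ j → 2 * C j ≤ 2 * C i := by
    intro i j h
    rw [hC, hC]
    have := mul_le_mul_of_nonneg_right h ht0.le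
    linarith
  have hDm : ∀ i j : ℤ, i ≤ j → D i ≤ D j := by
    intro i j h
    rw [hD, hD]
    have := mul_le_mul_of_nonneg_right h ht0.le
    linarith
  -- P2 : 2C0 - D0 ≤ 3 t k2
  have hP2 : 2 * C0 - D0 ≤ 3 * t * k2 := by
    have h1 : ⌈(4 * (C0 : ℚ) - 2 * D0) / (3 * ((2 * t : ℤ) : ℚ))⌉ ≤ k2 := by
      rw [hk2]; exact le_max_left _ _
    rw [Int.ceil_le, div_le_iff₀ h3pos] at h1
    have h2 : 4 * C0 - 2 * D0 ≤ k2 * (3 * (2 * t)) := by exact_mod_cast h1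
    linarith
  -- k2 = ceil when 1 ≤ k2
  have hk2c : 1 ≤ k2 → k2 = ⌈(4 * (C0 : ℚ) - 2 * D0) / (3 * ((2 * t : ℤ) : ℚ))⌉ := by
    intro h
    rw [hk2] at h ⊢
    exact hmax _ h
  -- P1
  have hP1 : k1 < k2 → 3 * t * k1 ≤ 2 * C0 - D0 := by
    intro h
    have hc := hk2c (by omega)
    rw [hc, Int.lt_ceil, lt_div_iff₀ h3pos] at h
    have h2 : k1 * (3 * (2 * t)) < 4 * C0 - 2 * D0 := by exact_mod_cast h
    linarith
  -- P3
  have hP3 : 1 ≤ k2 → 3 * t * (k2 - 1) ≤ 2 * C0 - D0 := by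
    intro h
    have hc := hk2c h
    have h1 : ((k2 : ℚ)) < (4 * (C0 : ℚ) - 2 * D0) / (3 * ((2 * t : ℤ) : ℚ)) + 1 := by
      rw [hc]; exact_mod_cast Int.ceil_lt_add_one _
    have h2 : ((k2 - 1 : ℤ) : ℚ) < (4 * (C0 : ℚ) - 2 * D0) / (3 * ((2 * t : ℤ) : ℚ)) := by
      push_cast at h1 ⊢
      linarith
    rw [lt_div_iff₀ h3pos] at h2
    have h3 : (k2 - 1) * (3 * (2 * t)) < 4 * C0 - 2 * D0 := by exact_mod_cast h2
    linarith
  -- P4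
  have hP4 : k3 = k2 → 1 ≤ k2 → 3 * t * k2 ≤ 2 * C0 - D0 + 2 * t := by
    intro h32 h
    have h1 : k2 ≤ ⌊(4 * (C0 : ℚ) - 2 * D0 + 2 * ((2 * t : ℤ) : ℚ)) / (3 * ((2 * t : ℤ) : ℚ))⌋ := by
      rw [← h32, hk3] at h ⊢
      rw [hmax _ h]
    rw [Int.le_floor, le_div_iff₀ h3pos] at h1
    have h2 : k2 * (3 * (2 * t)) ≤ 4 * C0 - 2 * D0 + 2 * (2 * t) := by exact_mod_cast h1
    linarith
  -- P5
  have hP5 : k3 < k2 → 2 * C0 - D0 + 2 * t ≤ 3 * t * k2 := by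
    intro h
    have h1 : ⌊(4 * (C0 : ℚ) - 2 * D0 + 2 * ((2 * t : ℤ) : ℚ)) / (3 * ((2 * t : ℤ) : ℚ))⌋ < k2 := by
      have := le_max_left ⌊(4 * (C0 : ℚ) - 2 * D0 + 2 * ((2 * t : ℤ) : ℚ)) / (3 * ((2 * t : ℤ) : ℚ))⌋ (0:ℤ)
      rw [← hk3] at this
      omega
    rw [Int.floor_lt, div_lt_iff₀ h3pos] at h1
    have h2 : 4 * C0 - 2 * D0 + 2 * (2 * t) < k2 * (3 * (2 * t)) := by exact_mod_cast h1
    linarith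
  refine ⟨?_, ?_, ?_⟩
  · -- case k1 < k2
    intro h12
    constructor
    · exact ⟨k1, hk1n, le_refl _, by
        rw [hF, max_eq_left]
        rw [hC, hD]
        have := hP1 h12
        linarith⟩
    · rintro x ⟨j, hj0, hjk, rfl⟩
      exact le_trans (hCm j k1 hjk) (hFC j)
  · -- case k3 = k2 ≤ k1
    rintro ⟨h32, h21⟩
    constructor
    · exact ⟨k2, hk2n, h21, by
        rw [hF, max_eq_right]
        rw [hC, hD]
        linarith [hP2]⟩
    · rintro x ⟨j, hj0, hjk, rfl⟩
      by_cases hjc : k2 ≤ j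
      · exact le_trans (hDm k2 j hjc) (hFD j)
      · push_neg at hjc
        have hk2one : 1 ≤ k2 := by omega
        have h4 := hP4 h32 hk2one
        have h5 : D k2 ≤ 2 * C (k2 - 1) := by
          rw [hD, hC]
          linarith
        have h6 : 2 * C (k2 - 1) ≤ 2 * C j := hCm j (k2 - 1) (by omega)
        linarith [hFC j]
  · -- case k3 < k2 ≤ k1
    rintro ⟨h32, h21⟩
    have hk2one : 1 ≤ k2 := by omega
    constructor
    · exact ⟨k2 - 1, by omega, by omega, by
        rw [hF, max_eq_left]
        rw [hC, hD]
        linarith [hP3 hk2one]⟩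
    · rintro x ⟨j, hj0, hjk, rfl⟩
      by_cases hjc : j ≤ k2 - 1
      · exact le_trans (hCm j (k2 - 1) hjc) (hFC j)
      · push_neg at hjc
        have h5 : 2 * C (k2 - 1) ≤ D k2 := by
          rw [hD, hC]
          linarith [hP5 h32]
        have h6 : D k2 ≤ D j := hDm k2 j (by omega)
        linarith [hFD j]
end
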